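/- arXiv:1212.6636 — 5 statements merged into one kernel-verified Lean document; each statement's English description precedes it below -/
import Mathlib

section
/- Let G be a finite strongly connected directed graph with at least one edge. Then there exists a sequence of subgraphs G₀ ⊆ G₁ ⊆ ... ⊆ G_m = G such that G₀ is a simple directed cycle and, for each i ≥ 1, G_i = G_{i-1} ∪ P_i where P_i is a chordal path of G_{i-1}, meaning a simple nonempty directed path P_i : u ⇝ v in G whose intersection with the vertex set of G_{i-1} is exactly {u, v}. -/
/-- The edges traversed by a list of vertices, in order. -/
def pathEdges {V : Type*} (l : List V) : Set (V × V) := {p | p ∈ l.zip l.tail}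

/-- Vertices touched by a set of edges. -/
def verts {V : Type*} (H : Set (V × V)) : Set V := {v | ∃ w, (v, w) ∈ H ∨ (w, v) ∈ H}

/-- A simple directed cycle, as a closed walk `v₀ … v_{m-1} v₀` with distinct
vertices except the repeated endpoint. -/
def IsSimpleCycle {V : Type*} (E : Set (V × V)) (l : List V) : Prop :=
  2 ≤ l.length ∧ l.head? = l.getLast? ∧ l.Chain' (fun a b => (a, b) ∈ E) ∧ l.dropLast.Nodup

/-- A chordal path for the subgraph `H`: a simple nonempty directed path in `E`
whose intersection with the vertex set of `H` is exactly its two endpoints. -/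
def IsChordalPath {V : Type*} (E H : Set (V × V)) (l : List V) : Prop :=
  2 ≤ l.length ∧ l.Chain' (fun a b => (a, b) ∈ E) ∧
  l.dropLast.Nodup ∧ l.tail.Nodup ∧
  (∀ v ∈ l, v ∈ verts H ↔ (l.head? = some v ∨ l.getLast? = some v))


/-!
Start from a simple cycle through any edge `(u, v)`: close a simple path from `v` back to `u`.
Given a subgraph `H` with `H ≠ E`, either some edge `(a, b)` of `E` leaves the vertex set of `H`,
and a simple path from `b` back to `a`, cut at its first return to `H`, yields a chordal path
through that edge; or no edge leaves it, in which case strong connectivity makes every vertex a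
vertex of `H` and any missing edge is a chordal path on its own. Either way a new edge is added,
so `|E \ H|` decreases and the process ends at `E`.
-/

open Relation

section

variable {V : Type*}

theorem Relation.ReflTransGen.exists_nodup_isChain {r : V → V → Prop} {a b : V}
    (h : ReflTransGen r a b) :
    ∃ l : List V, l.IsChain r ∧ l.Nodup ∧ l.head? = some a ∧ l.getLast? = some b := by
  induction h using ReflTransGen.head_induction_on with
  | refl => exact ⟨[b], by simp⟩
  | @head a c hac _ ih =>
    obtain ⟨l, hch, hnd, hhead, hlast⟩ := ih
    by_cases ha : a ∈ l
    · obtain ⟨s, t, rfl⟩ := List.append_of_mem ha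
      refine ⟨a :: t, hch.suffix (List.suffix_append _ _),
        hnd.sublist (List.sublist_append_right _ _), rfl, ?_⟩
      rwa [List.getLast?_append_of_ne_nil _ (List.cons_ne_nil _ _)] at hlast
    · refine ⟨a :: l, List.isChain_cons.2 ⟨by simpa [hhead] using hac, hch⟩, List.nodup_cons.2 ⟨ha, hnd⟩,
        rfl, ?_⟩
      simp [List.getLast?_cons, hlast]

theorem Relation.ReflTransGen.exists_rel_mem_not_mem {r : V → V → Prop} {S : Set V} {x y : V}
    (h : ReflTransGen r x y) (hx : x ∈ S) (hy : y ∉ S) : ∃ a b, r a b ∧ a ∈ S ∧ b ∉ S := by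
  induction h with
  | refl => exact absurd hx hy
  | @tail b c _ hbc ih =>
    by_cases hb : b ∈ S
    · exact ⟨b, c, hbc, hb, hy⟩
    · exact ih hb

theorem verts_mono {H K : Set (V × V)} (h : H ⊆ K) : verts H ⊆ verts K :=
  fun _ ⟨w, hw⟩ => ⟨w, hw.imp (@h _) (@h _)⟩

theorem mem_pathEdges_cons {a b : V} {l : List V} (h : l.head? = some b) :
    (a, b) ∈ pathEdges (a :: l) := by
  obtain ⟨t, rfl⟩ : ∃ t, l = b :: t := List.head?_eq_some_iff.1 h
  simp [pathEdges]

theorem pathEdges_subset {E : Set (V × V)} :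
    ∀ {l : List V}, l.IsChain (fun a b => (a, b) ∈ E) → pathEdges l ⊆ E
  | [], _ | [_], _ => by simp [pathEdges]
  | a :: b :: t, h => by
    rw [List.isChain_cons_cons] at h
    intro p hp
    rcases List.mem_cons.1 hp with rfl | hp
    · exact h.1
    · exact pathEdges_subset h.2 hp

theorem isChordalPath_cons_append_singleton {E H : Set (V × V)} {a x : V} {l : List V}
    (hch : (a :: (l ++ [x])).IsChain (fun u v => (u, v) ∈ E)) (hl : l.Nodup)
    (ha : a ∈ verts H) (hx : x ∈ verts H) (hlH : ∀ w ∈ l, w ∉ verts H) :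
    IsChordalPath E H (a :: (l ++ [x])) := by
  have hal : a ∉ l := fun h => hlH a h ha
  have hxl : x ∉ l := fun h => hlH x h hx
  refine ⟨by simp, hch, ?_, ?_, ?_⟩
  · rw [← List.cons_append, List.dropLast_concat]
    exact List.nodup_cons.2 ⟨hal, hl⟩
  · simpa using hl.concat hxl
  · have hlast : (a :: (l ++ [x])).getLast? = some x := by
      rw [← List.cons_append, List.getLast?_concat]
    intro w hw
    rw [List.mem_cons, List.mem_append, List.mem_singleton] at hw
    rcases hw with rfl | hw | rfl
    · simp [ha]
    · simp only [hlH w hw, false_iff, hlast, List.head?_cons, Option.some_inj, not_or]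
      exact ⟨fun h => hal (h ▸ hw), fun h => hxl (h ▸ hw)⟩
    · simp [hx, hlast]

theorem exists_chordalPath_edge_mem {E H : Set (V × V)} {a b : V}
    (hba : ReflTransGen (fun u v => (u, v) ∈ E) b a) (hab : (a, b) ∈ E)
    (ha : a ∈ verts H) : ∃ l, IsChordalPath E H l ∧ (a, b) ∈ pathEdges l := by
  classical
  obtain ⟨p, hch, hnd, hhead, hlast⟩ := hba.exists_nodup_isChain
  obtain ⟨x, hx⟩ : ∃ x, p.find? (· ∈ verts H) = some x :=
    Option.isSome_iff_exists.1 <| List.find?_isSome.2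
      ⟨a, List.mem_of_getLast? hlast, decide_eq_true ha⟩
  obtain ⟨hxH, l, t, rfl, hlH⟩ := List.find?_eq_some_iff_append.1 hx
  have hpre : l ++ [x] <+: l ++ x :: t := by simp
  have hhead' : (l ++ [x]).head? = some b := by rw [← hhead]; cases l <;> simp
  refine ⟨a :: (l ++ [x]), isChordalPath_cons_append_singleton ?_ ?_ ha (by simpa using hxH) ?_,
    mem_pathEdges_cons hhead'⟩
  · exact List.isChain_cons.2 ⟨by simpa [hhead'] using hab, hch.prefix hpre⟩
  · exact hnd.sublist (List.sublist_append_left _ _)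
  · simpa using hlH

theorem exists_chordalPath_not_subset {E H : Set (V × V)}
    (hSC : ∀ u v, ReflTransGen (fun a b => (a, b) ∈ E) u v)
    (hH : (verts H).Nonempty) (hEH : ¬ E ⊆ H) :
    ∃ l, IsChordalPath E H l ∧ ¬ pathEdges l ⊆ H := by
  by_cases hexit : ∃ a b, (a, b) ∈ E ∧ a ∈ verts H ∧ b ∉ verts H
  · obtain ⟨a, b, hab, ha, hb⟩ := hexit
    obtain ⟨l, hl, habl⟩ := exists_chordalPath_edge_mem (hSC b a) hab ha
    exact ⟨l, hl, fun hsub => hb ⟨a, Or.inr (hsub habl)⟩⟩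
  · obtain ⟨⟨u, v⟩, huv, huvH⟩ := Set.not_subset.1 hEH
    obtain ⟨x, hx⟩ := hH
    have hall : ∀ w, w ∈ verts H := fun w =>
      by_contra fun hw => hexit ((hSC x w).exists_rel_mem_not_mem hx hw)
    refine ⟨[u, v], isChordalPath_cons_append_singleton (l := []) (by simpa using huv)
      List.nodup_nil (hall u) (hall v) (by simp), fun hsub => huvH (hsub ?_)⟩
    exact mem_pathEdges_cons rfl

theorem exists_chordalPath_sequence {E H : Set (V × V)} [Finite V]
    (hSC : ∀ u v, ReflTransGen (fun a b => (a, b) ∈ E) u v) (hHE : H ⊆ E)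
    (hH : (verts H).Nonempty) :
    ∃ (m : ℕ) (Gs : ℕ → Set (V × V)), Gs 0 = H ∧ Gs m = E ∧ (∀ i, Gs i ⊆ Gs (i + 1)) ∧
      ∀ i < m, ∃ l, IsChordalPath E (Gs i) l ∧ Gs (i + 1) = Gs i ∪ pathEdges l := by
  induction hn : (E \ H).ncard using Nat.strong_induction_on generalizing H with
  | _ n ih =>
    by_cases hEH : E ⊆ H
    · exact ⟨0, fun _ => H, rfl, hHE.antisymm hEH, fun _ => subset_rfl, by simp⟩
    obtain ⟨l, hl, hlH⟩ := exists_chordalPath_not_subset hSC hH hEH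
    obtain ⟨e, hel, heH⟩ := Set.not_subset.1 hlH
    have hlE : pathEdges l ⊆ E := pathEdges_subset hl.2.1
    have hlt : (E \ (H ∪ pathEdges l)).ncard < n := by
      rw [← hn]
      refine Set.ncard_lt_ncard ⟨Set.sdiff_subset_sdiff_right Set.subset_union_left, ?_⟩
        (Set.toFinite _)
      exact fun h => (h ⟨hlE hel, heH⟩).2 (Or.inr hel)
    obtain ⟨m, Gs, hGs0, hGsm, hmono, hsteps⟩ := ih _ hlt (Set.union_subset hHE hlE)
      (hH.mono (verts_mono Set.subset_union_left)) rfl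
    refine ⟨m + 1, fun | 0 => H | i + 1 => Gs i, rfl, hGsm, ?_, ?_⟩
    · rintro (_ | i)
      · exact Set.subset_union_left.trans_eq hGs0.symm
      · exact hmono i
    · rintro (_ | i) hi
      · exact ⟨l, hl, hGs0⟩
      · exact hsteps i (by omega)

end

/-- chordal path decomposition of a strongly connected digraph. -/
theorem stmt_4 {V : Type*} [Fintype V] (E : Set (V × V)) (hne : E.Nonempty)
    (hSC : ∀ u v : V, Relation.ReflTransGen (fun a b => (a, b) ∈ E) u v) :
    ∃ (m : ℕ) (Gs : ℕ → Set (V × V)),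
      (∀ i, Gs i ⊆ Gs (i + 1)) ∧ Gs m = E ∧
      (∃ c : List V, IsSimpleCycle E c ∧ Gs 0 = pathEdges c) ∧
      (∀ i < m, ∃ l : List V, IsChordalPath E (Gs i) l ∧
        Gs (i + 1) = Gs i ∪ pathEdges l) := by
  obtain ⟨⟨u, v⟩, huv⟩ := hne
  obtain ⟨p, hch, hnd, hhead, hlast⟩ := (hSC v u).exists_nodup_isChain
  obtain ⟨q, rfl⟩ := List.getLast?_eq_some_iff.1 hlast
  have hcycle : IsSimpleCycle E (u :: (q ++ [u])) := by
    refine ⟨by simp, ?_, List.isChain_cons.2 ⟨by simpa [hhead] using huv, hch⟩, ?_⟩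
    · rw [List.head?_cons, ← List.cons_append, List.getLast?_concat]
    · rw [← List.cons_append, List.dropLast_concat]
      exact List.nodup_cons.2 ((List.nodup_concat q u).1 (by simpa using hnd))
  obtain ⟨m, Gs, hGs0, hGsm, hmono, hsteps⟩ := exists_chordalPath_sequence hSC
    (pathEdges_subset hcycle.2.2.1) ⟨u, v, Or.inl (mem_pathEdges_cons hhead)⟩
  exact ⟨m, Gs, hmono, hGsm, ⟨_, hcycle, hGs0⟩, hsteps⟩
end

section
/- Let G be a directed graph with inconsistent edges E^i, let ~ be the equivalence relation on E^i defined by R ~ S iff u_R and u_S lie in the same strongly connected component of G, and let 𝔼 be the quotient set. For C₁, C₂ ∈ 𝔼, define C₁ ≤⊕ C₂ if there exists S ∈ C₂ with u_S ∈ C₁^⊕, where C^⊕ = ⋂_{R ∈ C} u_R^⊕ and u^⊕ denotes consistent-edge reachability. Then ≤⊕ is antisymmetric and transitive on 𝔼. -/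
namespace CQA

variable {V : Type*}

/-- Directed reachability along edges in `A`. -/
def reach (A : Set (V × V)) (u v : V) : Prop :=
  Relation.ReflTransGen (fun x y => (x, y) ∈ A) u v

/-- `u` and `v` are in the same strongly connected component of the graph with edges `E`. -/
def sameSCC (E : Set (V × V)) (u v : V) : Prop := reach E u v ∧ reach E v u

/-- There is an undirected path in `E` from `a` to `b` all of whose vertices
(including the endpoints) avoid the set `A`. -/
def ureach (E : Set (V × V)) (A : Set V) (a b : V) : Prop :=
  a ∉ A ∧ Relation.ReflTransGen (fun x y => ((x, y) ∈ E ∨ (y, x) ∈ E) ∧ y ∉ A) a b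

/-- `u_R^{+,R}`: vertices reachable from the source of `R` in `G − {R}`. -/
def uplus (E : Set (V × V)) (R : V × V) : Set V := {v | reach (E \ {R}) R.1 v}

/-- `u^⊕`: vertices reachable from `u` using only consistent edges `Ec`. -/
def uoplus (Ec : Set (V × V)) (u : V) : Set V := {v | reach Ec u v}

/-- `C` is a source-equivalence class of inconsistent edges `Ei`. -/
def IsClass (E Ei : Set (V × V)) (C : Set (V × V)) : Prop :=
  ∃ R ∈ Ei, C = {S ∈ Ei | sameSCC E R.1 S.1}

/-- `C^⊕ = ⋂_{R ∈ C} u_R^⊕`. -/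
def Coplus (Ec : Set (V × V)) (C : Set (V × V)) : Set V :=
  {v | ∀ R ∈ C, v ∈ uoplus Ec R.1}

/-- `C⁺ = ⋂_{R ∈ C} u_R^{+,R}`. -/
def Cplus (E : Set (V × V)) (C : Set (V × V)) : Set V :=
  {v | ∀ R ∈ C, v ∈ uplus E R}

/-- `C₁ ≤⊕ C₂` iff some `S ∈ C₂` has `u_S ∈ C₁^⊕`. -/
def leOplus (Ec : Set (V × V)) (C₁ C₂ : Set (V × V)) : Prop :=
  ∃ S ∈ C₂, S.1 ∈ Coplus Ec C₁

/-- The strict order `C₁ <⊕ C₂`. -/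
def ltOplus (Ec : Set (V × V)) (C₁ C₂ : Set (V × V)) : Prop :=
  leOplus Ec C₁ C₂ ∧ C₁ ≠ C₂

/-- A sink: a maximal element of `<⊕` among source-equivalence classes. -/
def IsSink (E Ei Ec : Set (V × V)) (C : Set (V × V)) : Prop :=
  IsClass E Ei C ∧ ∀ C', IsClass E Ei C' → ¬ ltOplus Ec C C'

/-- `C' ∈ coupled⊕(C)`. -/
def coupledOplusCl (E Ec : Set (V × V)) (C C' : Set (V × V)) : Prop :=
  C' = C ∨ ∃ R ∈ C, ∃ S ∈ C', ureach E (Coplus Ec C) R.2 S.1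

/-- `C' ∈ coupled⁺(C)`. -/
def coupledPlusCl (E : Set (V × V)) (C C' : Set (V × V)) : Prop :=
  C' = C ∨ ∃ R ∈ C, ∃ S ∈ C', ureach E (Cplus E C) R.2 S.1

/-- `S ∈ coupled⁺(R)` for inconsistent edges `R, S`:
either `S ∈ [R]`, or there is an undirected path `v_R ↔ u_S` avoiding `u_R^{+,R}`. -/
def coupledPlusEdge (E Ei : Set (V × V)) (R S : V × V) : Prop :=
  S ∈ Ei ∧ (sameSCC E R.1 S.1 ∨ ureach E (uplus E R) R.2 S.1)

/-- `G` is splittable: every coupled pair of inconsistent edges is source-equivalent. -/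
def Splittable (E Ec : Set (V × V)) : Prop :=
  ∀ R ∈ E \ Ec, ∀ S ∈ E \ Ec,
    coupledPlusEdge E (E \ Ec) R S → coupledPlusEdge E (E \ Ec) S R → sameSCC E R.1 S.1

/-- `G` is f-closed: for every inconsistent edge `R`,
`v_R^⊕ ∩ u_R^{+,R} ⊆ u_R^⊕`. -/
def FClosed (E Ec : Set (V × V)) : Prop :=
  ∀ R ∈ E \ Ec, ∀ v, v ∈ uoplus Ec R.2 → v ∈ uplus E R → v ∈ uoplus Ec R.1

end CQA

namespace CQA

variable {V : Type*}

theorem reach_mono {A B : Set (V × V)} (hAB : A ⊆ B) {u v : V} (h : reach A u v) :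
    reach B u v :=
  Relation.ReflTransGen.mono (fun _ _ hxy => hAB hxy) _ _ h

theorem sameSCC_equivalence (E : Set (V × V)) : Equivalence (sameSCC E) where
  refl _ := ⟨.refl, .refl⟩
  symm h := ⟨h.2, h.1⟩
  trans h₁ h₂ := ⟨h₁.1.trans h₂.1, h₂.2.trans h₁.2⟩

theorem IsClass.eq_setOf_sameSCC_of_mem {E Ei C : Set (V × V)} (hC : IsClass E Ei C)
    {S : V × V} (hS : S ∈ C) : C = {X ∈ Ei | sameSCC E S.1 X.1} := by
  obtain ⟨R, -, rfl⟩ := hC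
  have hRS : sameSCC E R.1 S.1 := hS.2
  have eqv := sameSCC_equivalence E
  ext X
  exact and_congr_right fun _ => ⟨eqv.trans (eqv.symm hRS), eqv.trans hRS⟩

theorem IsClass.eq_of_sameSCC {E Ei C₁ C₂ : Set (V × V)} (hC₁ : IsClass E Ei C₁)
    (hC₂ : IsClass E Ei C₂) {R S : V × V} (hR : R ∈ C₁) (hS : S ∈ C₂)
    (hRS : sameSCC E R.1 S.1) : C₁ = C₂ := by
  rw [hC₁.eq_setOf_sameSCC_of_mem hR, hC₂.eq_setOf_sameSCC_of_mem hS]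
  ext X
  have eqv := sameSCC_equivalence E
  exact and_congr_right fun _ => ⟨eqv.trans (eqv.symm hRS), eqv.trans hRS⟩

theorem leOplus_trans {Ec C₁ C₂ C₃ : Set (V × V)} (h₁₂ : leOplus Ec C₁ C₂)
    (h₂₃ : leOplus Ec C₂ C₃) : leOplus Ec C₁ C₃ := by
  obtain ⟨S, hS, hS₁⟩ := h₁₂
  obtain ⟨T, hT, hT₂⟩ := h₂₃
  exact ⟨T, hT, fun R hR => (hS₁ R hR).trans (hT₂ S hS)⟩

theorem leOplus_antisymm {E Ec C₁ C₂ : Set (V × V)} (hEc : Ec ⊆ E)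
    (hC₁ : IsClass E (E \ Ec) C₁) (hC₂ : IsClass E (E \ Ec) C₂)
    (h₁₂ : leOplus Ec C₁ C₂) (h₂₁ : leOplus Ec C₂ C₁) : C₁ = C₂ := by
  obtain ⟨S, hS, hS₁⟩ := h₁₂
  obtain ⟨T, hT, hT₂⟩ := h₂₁
  exact hC₁.eq_of_sameSCC hC₂ hT hS ⟨reach_mono hEc (hS₁ T hT), reach_mono hEc (hT₂ S hS)⟩

end CQA

open CQA in
theorem stmt_7_general {V : Type*} (E Ec : Set (V × V)) (hEc : Ec ⊆ E) :
    (∀ C₁ C₂, IsClass E (E \ Ec) C₁ → IsClass E (E \ Ec) C₂ →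
      leOplus Ec C₁ C₂ → leOplus Ec C₂ C₁ → C₁ = C₂) ∧
    (∀ C₁ C₂ C₃, IsClass E (E \ Ec) C₁ → IsClass E (E \ Ec) C₂ → IsClass E (E \ Ec) C₃ →
      leOplus Ec C₁ C₂ → leOplus Ec C₂ C₃ → leOplus Ec C₁ C₃) :=
  ⟨fun _ _ hC₁ hC₂ => leOplus_antisymm hEc hC₁ hC₂, fun _ _ _ _ _ _ => leOplus_trans⟩

open CQA in
/-- ≤⊕ is antisymmetric and transitive on source-equivalence classes. -/
theorem stmt_7 {V : Type*} [Fintype V] (E Ec : Set (V × V)) (hEc : Ec ⊆ E) :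
    (∀ C₁ C₂, IsClass E (E \ Ec) C₁ → IsClass E (E \ Ec) C₂ →
      leOplus Ec C₁ C₂ → leOplus Ec C₂ C₁ → C₁ = C₂) ∧
    (∀ C₁ C₂ C₃, IsClass E (E \ Ec) C₁ → IsClass E (E \ Ec) C₂ → IsClass E (E \ Ec) C₃ →
      leOplus Ec C₁ C₂ → leOplus Ec C₂ C₃ → leOplus Ec C₁ C₃) :=
  stmt_7_general E Ec hEc
end

section
/- Let G be a directed graph with inconsistent edges E^i, and let C be a sink of the strict partial order <⊕ on the quotient 𝔼 of source-equivalence classes (i.e., a maximal element). Then the set coupled⊕(C) is upward closed: if C₀ ∈ coupled⊕(C) and C₀ <⊕ C₁, then C₁ ∈ coupled⊕(C). -/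
theorem Relation.ReflTransGen.and_not_mem_of_forall_mem {α : Type*} {r : α → α → Prop}
    {A : Set α} (hA : ∀ x y, x ∈ A → ReflTransGen r x y → y ∈ A)
    {a b : α} (h : ReflTransGen r a b) (hb : b ∉ A) :
    ReflTransGen (fun x y => r x y ∧ y ∉ A) a b := by
  induction h using ReflTransGen.head_induction_on with
  | refl => exact .refl
  | head hac hcb ih => exact .head ⟨hac, fun hcA => hb (hA _ _ hcA hcb)⟩ ih

namespace CQA

variable {V : Type*}

theorem mem_coplus_of_reach {Ec C : Set (V × V)} {v w : V} (hv : v ∈ Coplus Ec C)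
    (hvw : reach Ec v w) : w ∈ Coplus Ec C :=
  fun R hR => (hv R hR).trans hvw

theorem ureach.trans_reach {E Ec C : Set (V × V)} (hEc : Ec ⊆ E) {a b c : V}
    (hab : ureach E (Coplus Ec C) a b) (hbc : reach Ec b c) (hc : c ∉ Coplus Ec C) :
    ureach E (Coplus Ec C) a c := by
  have hbc_avoid := hbc.and_not_mem_of_forall_mem (fun _ _ => mem_coplus_of_reach) hc
  refine ⟨hab.1, hab.2.trans ?_⟩
  exact Relation.ReflTransGen.mono (fun _ _ h => ⟨Or.inl (hEc h.1), h.2⟩) _ _ hbc_avoid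

theorem IsSink.eq_of_leOplus {E Ei Ec C C' : Set (V × V)} (hC : IsSink E Ei Ec C)
    (hC' : IsClass E Ei C') (hle : leOplus Ec C C') : C' = C := by
  by_contra hne
  exact hC.2 C' hC' ⟨hle, Ne.symm hne⟩

end CQA

open CQA in
theorem stmt_8_general {V : Type*} (E Ec : Set (V × V)) (hEc : Ec ⊆ E)
    (C : Set (V × V)) (hC : IsSink E (E \ Ec) Ec C)
    (C₀ C₁ : Set (V × V)) (h₁ : IsClass E (E \ Ec) C₁)
    (hc : coupledOplusCl E Ec C C₀) (hlt : ltOplus Ec C₀ C₁) :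
    coupledOplusCl E Ec C C₁ := by
  rcases hc with rfl | ⟨R, hR, S₀, hS₀, hpath⟩
  · exact (hC.2 C₁ h₁ hlt).elim
  obtain ⟨⟨S₁, hS₁, hS₁C₀⟩, -⟩ := hlt
  by_cases hS₁C : S₁.1 ∈ Coplus Ec C
  · exact Or.inl (hC.eq_of_leOplus h₁ ⟨S₁, hS₁, hS₁C⟩)
  · exact Or.inr ⟨R, hR, S₁, hS₁, hpath.trans_reach hEc (hS₁C₀ S₀ hS₀) hS₁C⟩

open CQA in
/-- for a sink C, coupled⊕(C) is upward closed under <⊕. -/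
theorem stmt_8 {V : Type*} [Fintype V] (E Ec : Set (V × V)) (hEc : Ec ⊆ E)
    (C : Set (V × V)) (hC : IsSink E (E \ Ec) Ec C)
    (C₀ C₁ : Set (V × V)) (h₀ : IsClass E (E \ Ec) C₀) (h₁ : IsClass E (E \ Ec) C₁)
    (hc : coupledOplusCl E Ec C C₀) (hlt : ltOplus Ec C₀ C₁) :
    coupledOplusCl E Ec C C₁ :=
  stmt_8_general E Ec hEc C hC C₀ C₁ h₁ hc hlt
end

section
/- Let G be a splittable directed graph with inconsistent edges E^i, and let C₁ ≠ C₂ be distinct source-equivalence classes. Then it is not the case that both C₁ ∈ coupled⁺(C₂) and C₂ ∈ coupled⁺(C₁). -/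
/-!
A class-level coupling path from `v_R` that avoids `C⁺` can be re-rooted at a single edge `T` of
the class so that it avoids `u_T^{+,T}`: whenever it enters `u_T^{+,T}`, the current vertex is
reachable from every source of the class but lies outside some `u_{T₂}^{+,T₂}`, and a directed path
can only leave `u_{T₂}^{+,T₂}` through the edge `T₂` itself. Given such edge-level paths from
`T ∈ C₂` to `C₁` and from `T' ∈ C₁` to `C₂`, pushing them forward inside the strongly connected
classes shows that `u_T` reaches `u_{T'}`, unless `T` and some edge of `C₁` are coupled, which
splittability forbids. By symmetry `u_T` and `u_{T'}` share an SCC, so `C₁ = C₂`.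
-/

namespace CQA

variable {V : Type*} {E : Set (V × V)}

theorem reach_of_mem_uplus {R : V × V} {v : V} (h : v ∈ uplus E R) : reach E R.1 v :=
  Relation.ReflTransGen.mono (r := fun x y => (x, y) ∈ E \ {R})
    (fun _ _ hxy => Set.sdiff_subset hxy) _ _ h

theorem sameSCC.symm {u v : V} (h : sameSCC E u v) : sameSCC E v u :=
  ⟨h.2, h.1⟩

theorem sameSCC.trans {u v w : V} (h₁ : sameSCC E u v) (h₂ : sameSCC E v w) : sameSCC E u w :=
  ⟨h₁.1.trans h₂.1, h₂.2.trans h₁.2⟩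

theorem eq_of_mem_uplus_of_not_mem_uplus {R : V × V} {c d : V} (hc : c ∈ uplus E R)
    (hcd : (c, d) ∈ E) (hd : d ∉ uplus E R) : (c, d) = R := by
  by_contra hne
  exact hd (Relation.ReflTransGen.tail hc ⟨hcd, hne⟩)

theorem reach_fst_of_reach_of_not_mem_uplus {B : V × V} {x y : V} (hx : x ∈ uplus E B)
    (hr : reach E x y) (hy : y ∉ uplus E B) : reach E x B.1 := by
  induction hr with
  | refl => exact absurd hx hy
  | @tail b c hxb hbc ih =>
    by_cases hb : b ∈ uplus E B
    · rw [← congrArg Prod.fst (eq_of_mem_uplus_of_not_mem_uplus hb hbc hy)]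
      exact hxb
    · exact ih hb

theorem ureach.tail {A : Set V} {a b c : V} (h : ureach E A a b)
    (hbc : (b, c) ∈ E ∨ (c, b) ∈ E) (hc : c ∉ A) : ureach E A a c :=
  ⟨h.1, h.2.tail ⟨hbc, hc⟩⟩

theorem ureach.right_not_mem {A : Set V} {a b : V} (h : ureach E A a b) : b ∉ A := by
  rcases Relation.ReflTransGen.cases_tail h.2 with rfl | ⟨_, _, hb⟩
  · exact h.1
  · exact hb.2

theorem ureach_uplus_of_reach {T : V × V} {z : V} (hr : reach E T.1 z) (hz : z ∉ uplus E T) :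
    ureach E (uplus E T) T.2 z := by
  induction hr with
  | refl => exact absurd Relation.ReflTransGen.refl hz
  | @tail b c _ hbc ih =>
    by_cases hb : b ∈ uplus E T
    · obtain rfl : c = T.2 := congrArg Prod.snd (eq_of_mem_uplus_of_not_mem_uplus hb hbc hz)
      exact ⟨hz, .refl⟩
    · exact (ih hb).tail (Or.inl hbc) hz

section SCCBlock

variable {C : Set (V × V)} (hC : ∀ A ∈ C, ∀ B ∈ C, sameSCC E A.1 B.1)
include hC

theorem exists_ureach_uplus_of_reach {T : V × V} (hT : T ∈ C) {z : V} (hr : reach E T.1 z)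
    (hz : z ∉ Cplus E C) : ∃ B ∈ C, ureach E (uplus E B) B.2 z := by
  obtain ⟨B, hB, hzB⟩ : ∃ B ∈ C, z ∉ uplus E B := by simpa [Cplus] using hz
  exact ⟨B, hB, ureach_uplus_of_reach ((hC B hB T hT).1.trans hr) hzB⟩

theorem exists_ureach_uplus_of_ureach_Cplus {R : V × V} (hR : R ∈ C) (hRE : R ∈ E) {z : V}
    (h : ureach E (Cplus E C) R.2 z) : ∃ T ∈ C, ureach E (uplus E T) T.2 z := by
  obtain ⟨hR₂, hw⟩ := h
  induction hw with
  | refl => exact exists_ureach_uplus_of_reach hC hR (Relation.ReflTransGen.single hRE) hR₂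
  | @tail b c _ hbc ih =>
    obtain ⟨T, hT, hTb⟩ := ih
    by_cases hc : c ∈ uplus E T
    · exact exists_ureach_uplus_of_reach hC hT (reach_of_mem_uplus hc) hbc.2
    · exact ⟨T, hT, hTb.tail hbc.1 hc⟩

theorem exists_ureach_uplus_or_mem_Cplus_of_reach {B₀ : V × V} (hB₀ : B₀ ∈ C) {s t : V}
    (hs : ureach E (uplus E B₀) B₀.2 s) (hr : reach E s t) :
    (∃ B ∈ C, ureach E (uplus E B) B.2 t) ∨ t ∈ Cplus E C := by
  induction hr with
  | refl => exact Or.inl ⟨B₀, hB₀, hs⟩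
  | @tail c d _ hcd ih =>
    by_cases hdC : d ∈ Cplus E C
    · exact Or.inr hdC
    refine Or.inl ?_
    rcases ih with ⟨B, hB, hBc⟩ | hcC
    · by_cases hdB : d ∈ uplus E B
      · exact exists_ureach_uplus_of_reach hC hB (reach_of_mem_uplus hdB) hdC
      · exact ⟨B, hB, hBc.tail (Or.inl hcd) hdB⟩
    · exact exists_ureach_uplus_of_reach hC hB₀
        (Relation.ReflTransGen.tail (reach_of_mem_uplus (hcC B₀ hB₀)) hcd) hdC

end SCCBlock

theorem ureach_uplus_or_mem_uplus_of_reach {A : V × V} {s t : V}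
    (hs : ureach E (uplus E A) A.2 s) (hr : reach E s t) :
    ureach E (uplus E A) A.2 t ∨ t ∈ uplus E A := by
  have hA : ∀ X ∈ ({A} : Set (V × V)), ∀ Y ∈ ({A} : Set (V × V)), sameSCC E X.1 Y.1 := by
    rintro _ rfl _ rfl
    exact ⟨.refl, .refl⟩
  simpa [Cplus] using exists_ureach_uplus_or_mem_Cplus_of_reach hA rfl hs hr

section IsClass

variable {Ei C C₁ C₂ : Set (V × V)}

theorem IsClass.subset (h : IsClass E Ei C) : C ⊆ Ei := by
  obtain ⟨_, _, rfl⟩ := h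
  exact fun _ hX => hX.1

theorem IsClass.sameSCC_of_mem (h : IsClass E Ei C) : ∀ A ∈ C, ∀ B ∈ C, sameSCC E A.1 B.1 := by
  obtain ⟨_, _, rfl⟩ := h
  exact fun _ hA _ hB => hA.2.symm.trans hB.2

theorem IsClass.eq_of_sameSCC_s10 (h₁ : IsClass E Ei C₁) (h₂ : IsClass E Ei C₂) {A B : V × V}
    (hA : A ∈ C₁) (hB : B ∈ C₂) (hAB : sameSCC E A.1 B.1) : C₁ = C₂ := by
  obtain ⟨W₁, _, rfl⟩ := h₁
  obtain ⟨W₂, _, rfl⟩ := h₂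
  have hW : sameSCC E W₁.1 W₂.1 := (hA.2.trans hAB).trans hB.2.symm
  ext X
  exact ⟨fun hX => ⟨hX.1, hW.symm.trans hX.2⟩, fun hX => ⟨hX.1, hW.trans hX.2⟩⟩

end IsClass

theorem reach_fst_of_ureach_uplus_of_ureach_uplus {Ec C₁ C₂ : Set (V × V)}
    (hsp : Splittable E Ec) (h₁ : IsClass E (E \ Ec) C₁) (h₂ : IsClass E (E \ Ec) C₂)
    (hne : C₁ ≠ C₂) {T S T' S' : V × V} (hT : T ∈ C₂) (hS : S ∈ C₁) (hT' : T' ∈ C₁)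
    (hS' : S' ∈ C₂) (hTS : ureach E (uplus E T) T.2 S.1)
    (hT'S' : ureach E (uplus E T') T'.2 S'.1) : reach E T.1 T'.1 := by
  by_contra hn
  rcases exists_ureach_uplus_or_mem_Cplus_of_reach h₁.sameSCC_of_mem hT' hT'S'
      (h₂.sameSCC_of_mem S' hS' T hT).1 with ⟨B, hB, hBT⟩ | hTC
  · rcases ureach_uplus_or_mem_uplus_of_reach hTS (h₁.sameSCC_of_mem S hS B hB).1 with
      hTB | hBT
    · have hTE := h₂.subset hT
      have hBE := h₁.subset hB
      exact hne (h₁.eq_of_sameSCC_s10 h₂ hB hT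
        (hsp B hBE T hTE ⟨hTE, Or.inr hBT⟩ ⟨hBE, Or.inr hTB⟩))
    · exact hn ((reach_of_mem_uplus hBT).trans (h₁.sameSCC_of_mem B hB T' hT').1)
  · exact hn (reach_fst_of_reach_of_not_mem_uplus (hTC T' hT')
      (h₂.sameSCC_of_mem T hT S' hS').1 hT'S'.right_not_mem)

end CQA

open CQA in
theorem stmt_10_general {V : Type*} (E Ec : Set (V × V))
    (hsp : Splittable E Ec)
    (C₁ C₂ : Set (V × V)) (h₁ : IsClass E (E \ Ec) C₁) (h₂ : IsClass E (E \ Ec) C₂)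
    (hne : C₁ ≠ C₂) :
    ¬ (coupledPlusCl E C₂ C₁ ∧ coupledPlusCl E C₁ C₂) := by
  rintro ⟨h₂₁ | ⟨R, hR, S, hS, hRS⟩, h₁₂⟩
  · exact hne h₂₁
  rcases h₁₂ with h₁₂ | ⟨R', hR', S', hS', hR'S'⟩
  · exact hne h₁₂.symm
  obtain ⟨T, hT, hTS⟩ :=
    exists_ureach_uplus_of_ureach_Cplus h₂.sameSCC_of_mem hR (h₂.subset hR).1 hRS
  obtain ⟨T', hT', hT'S'⟩ :=
    exists_ureach_uplus_of_ureach_Cplus h₁.sameSCC_of_mem hR' (h₁.subset hR').1 hR'S'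
  exact hne (h₁.eq_of_sameSCC_s10 h₂ hT' hT
    ⟨reach_fst_of_ureach_uplus_of_ureach_uplus hsp h₂ h₁ hne.symm hT' hS' hT hS hT'S' hTS,
      reach_fst_of_ureach_uplus_of_ureach_uplus hsp h₁ h₂ hne hT hS hT' hS' hTS hT'S'⟩)

open CQA in
/-- in a splittable graph, distinct classes cannot be mutually coupled. -/
theorem stmt_10 {V : Type*} [Fintype V] (E Ec : Set (V × V)) (hEc : Ec ⊆ E)
    (hsp : Splittable E Ec)
    (C₁ C₂ : Set (V × V)) (h₁ : IsClass E (E \ Ec) C₁) (h₂ : IsClass E (E \ Ec) C₂)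
    (hne : C₁ ≠ C₂) :
    ¬ (coupledPlusCl E C₂ C₁ ∧ coupledPlusCl E C₁ C₂) :=
  stmt_10_general E Ec hsp C₁ C₂ h₁ h₂ hne
end

section
/- Let Q be a Boolean conjunctive query and I an instance. Then there exists a purified subinstance I^p ⊆ I such that the collection of full-query answer sets over frugal repairs is preserved: M_Q(I) = M_Q(I^p). Consequently I ⊨ Q if and only if I^p ⊨ Q. -/
open scoped Classical

private lemma aux_extend {τ κ : Type*} (key : τ → κ) (I : Finset τ) :
    ∀ n (c : Finset τ), c ⊆ I →
      (∀ t₁ ∈ c, ∀ t₂ ∈ c, key t₁ = key t₂ → t₁ = t₂) →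
      I.card - c.card ≤ n →
      ∃ r, c ⊆ r ∧ r ⊆ I ∧
        (∀ t₁ ∈ r, ∀ t₂ ∈ r, key t₁ = key t₂ → t₁ = t₂) ∧
        (∀ t ∈ I, ∃ t' ∈ r, key t' = key t) := by
  intro n
  induction n with
  | zero =>
    intro c hcI hcons hn
    have hcard := Finset.card_le_card hcI
    have hEq : c = I := Finset.eq_of_subset_of_card_le hcI (by omega)
    exact ⟨c, subset_rfl, hcI, hcons, fun t ht => ⟨t, hEq ▸ ht, rfl⟩⟩
  | succ n ih =>
    intro c hcI hcons hn
    by_cases hcov : ∀ t ∈ I, ∃ t' ∈ c, key t' = key t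
    · exact ⟨c, subset_rfl, hcI, hcons, hcov⟩
    · push_neg at hcov
      obtain ⟨t, htI, hun⟩ := hcov
      have htc : t ∉ c := fun h => hun t h rfl
      have hsub : insert t c ⊆ I := Finset.insert_subset htI hcI
      have hcons' : ∀ t₁ ∈ insert t c, ∀ t₂ ∈ insert t c, key t₁ = key t₂ → t₁ = t₂ := by
        intro u hu v hv he
        rcases Finset.mem_insert.mp hu with hu' | hu' <;>
          rcases Finset.mem_insert.mp hv with hv' | hv'
        · rw [hu', hv']
        · rw [hu'] at he; exact absurd he.symm (hun v hv')
        · rw [hv'] at he; exact absurd he (hun u hu')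
        · exact hcons u hu' v hv' he
      have hcard : (insert t c).card = c.card + 1 := Finset.card_insert_of_notMem htc
      obtain ⟨r, hcr, hr⟩ := ih (insert t c) hsub hcons' (by omega)
      exact ⟨r, (Finset.subset_insert t c).trans hcr, hr⟩

private lemma aux_frugal {τ β : Type*} (J : Finset τ) (Qf : Finset τ → Set β)
    (P : Finset τ → Prop) (hsub : ∀ r, P r → r ⊆ J) :
    ∀ n (r : Finset τ), P r →
      (J.powerset.filter fun r' => P r' ∧ Qf r' ⊆ Qf r).card ≤ n →
      ∃ r₀, P r₀ ∧ (¬ ∃ r', P r' ∧ Qf r' ⊂ Qf r₀) ∧ Qf r₀ ⊆ Qf r := by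
  intro n
  induction n with
  | zero =>
    intro r hr hn
    have hmem : r ∈ J.powerset.filter fun r' => P r' ∧ Qf r' ⊆ Qf r :=
      Finset.mem_filter.mpr ⟨Finset.mem_powerset.mpr (hsub r hr), hr, subset_rfl⟩
    have := Finset.card_pos.mpr ⟨r, hmem⟩
    omega
  | succ n ih =>
    intro r hr hn
    by_cases hfr : ∃ r', P r' ∧ Qf r' ⊂ Qf r
    · obtain ⟨r₁, hr₁, hss⟩ := hfr
      have hsubS : (J.powerset.filter fun r' => P r' ∧ Qf r' ⊆ Qf r₁) ⊆
          (J.powerset.filter fun r' => P r' ∧ Qf r' ⊆ Qf r) := by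
        intro x hx
        obtain ⟨hx1, hx2, hx3⟩ := Finset.mem_filter.mp hx
        exact Finset.mem_filter.mpr ⟨hx1, hx2, hx3.trans hss.subset⟩
      have hmem : r ∈ J.powerset.filter fun r' => P r' ∧ Qf r' ⊆ Qf r :=
        Finset.mem_filter.mpr ⟨Finset.mem_powerset.mpr (hsub r hr), hr, subset_rfl⟩
      have hnot : r ∉ J.powerset.filter fun r' => P r' ∧ Qf r' ⊆ Qf r₁ := by
        intro hmem'
        obtain ⟨_, _, hx3⟩ := Finset.mem_filter.mp hmem'
        exact hss.ne (Set.Subset.antisymm hss.subset hx3)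
      have hlt : (J.powerset.filter fun r' => P r' ∧ Qf r' ⊆ Qf r₁).card <
          (J.powerset.filter fun r' => P r' ∧ Qf r' ⊆ Qf r).card :=
        Finset.card_lt_card ⟨hsubS, fun hback => hnot (hback hmem)⟩
      obtain ⟨r₀, h1, h2, h3⟩ := ih r₁ hr₁ (by omega)
      exact ⟨r₀, h1, h2, h3.trans hss.subset⟩
    · exact ⟨r, hr, hfr, subset_rfl⟩

/-- every instance I has a purified subinstance I^p with the same
collection M_Q of full-query answer sets over frugal repairs; hence I ⊨ Q iff
I^p ⊨ Q.  A conjunctive query is modeled by a join condition `Cond` on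
candidate answers together with, for each atom `i`, the tuple `tupleOf i a`
that answer `a` uses in atom `i`. -/
theorem stmt_18 {τ κ β ι : Type*} (I : Finset τ) (key : τ → κ)
    (tupleOf : ι → β → τ) (Cond : β → Prop)
    (Qf : Finset τ → Set β)
    (hQf : ∀ J, Qf J = {a | Cond a ∧ ∀ i, tupleOf i a ∈ J})
    (IsRepair : Finset τ → Finset τ → Prop)
    (hRep : ∀ J r, IsRepair J r ↔ r ⊆ J ∧
        (∀ t₁ ∈ r, ∀ t₂ ∈ r, key t₁ = key t₂ → t₁ = t₂) ∧
        (∀ t ∈ J, ∃ t' ∈ r, key t' = key t))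
    (M : Finset τ → Set (Set β))
    (hM : ∀ J, M J = {s | ∃ r, IsRepair J r ∧
        (¬ ∃ r', IsRepair J r' ∧ Qf r' ⊂ Qf r) ∧ s = Qf r}) :
    ∃ Ip ⊆ I, (∀ t ∈ Ip, ∃ a ∈ Qf Ip, ∃ i, tupleOf i a = t) ∧ M I = M Ip ∧
      ((∀ r, IsRepair I r → (Qf r).Nonempty) ↔
        (∀ r, IsRepair Ip r → (Qf r).Nonempty)) := by
  classical
  have memQf : ∀ (J : Finset τ) (a : β), a ∈ Qf J ↔ Cond a ∧ ∀ i, tupleOf i a ∈ J := by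
    intro J a; rw [hQf]; exact Iff.rfl
  have Qf_mono : ∀ {J J' : Finset τ}, J ⊆ J' → Qf J ⊆ Qf J' := by
    intro J J' h a ha
    rw [memQf] at ha ⊢
    exact ⟨ha.1, fun i => h (ha.2 i)⟩
  set F : Set β :=
    {a | ∃ r, IsRepair I r ∧ (¬ ∃ r', IsRepair I r' ∧ Qf r' ⊂ Qf r) ∧ a ∈ Qf r} with hFdef
  have memF : ∀ a : β, a ∈ F ↔
      ∃ r, IsRepair I r ∧ (¬ ∃ r', IsRepair I r' ∧ Qf r' ⊂ Qf r) ∧ a ∈ Qf r := by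
    intro a; rw [hFdef]; exact Iff.rfl
  set Ip : Finset τ := I.filter (fun t => ∃ a ∈ F, ∃ i, tupleOf i a = t) with hIpdef
  have hIpI : Ip ⊆ I := Finset.filter_subset _ _
  have memIp : ∀ t, t ∈ Ip ↔ t ∈ I ∧ ∃ a ∈ F, ∃ i, tupleOf i a = t := by
    intro t; rw [hIpdef]; exact Finset.mem_filter
  have F_tuples : ∀ a ∈ F, ∀ i, tupleOf i a ∈ Ip := by
    intro a ha i
    obtain ⟨r, hr, hfr, haQf⟩ := (memF a).mp ha
    have hrI : r ⊆ I := ((hRep I r).mp hr).1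
    have hmem : tupleOf i a ∈ r := ((memQf r a).mp haQf).2 i
    exact (memIp _).mpr ⟨hrI hmem, a, ha, i, rfl⟩
  have F_Qf : F ⊆ Qf Ip := by
    intro a ha
    have hc : Cond a := by
      obtain ⟨r, _, _, haQf⟩ := (memF a).mp ha
      exact ((memQf r a).mp haQf).1
    exact (memQf Ip a).mpr ⟨hc, fun i => F_tuples a ha i⟩
  have frugalBelow : ∀ (J r : Finset τ), IsRepair J r →
      ∃ r₀, IsRepair J r₀ ∧ (¬ ∃ r', IsRepair J r' ∧ Qf r' ⊂ Qf r₀) ∧ Qf r₀ ⊆ Qf r := by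
    intro J r hr
    exact aux_frugal J Qf (IsRepair J) (fun r' h => ((hRep J r').mp h).1) _ r hr le_rfl
  have extendRep : ∀ c : Finset τ, c ⊆ I →
      (∀ t₁ ∈ c, ∀ t₂ ∈ c, key t₁ = key t₂ → t₁ = t₂) →
      ∃ r, c ⊆ r ∧ IsRepair I r := by
    intro c hcI hcons
    obtain ⟨r, hcr, h1, h2, h3⟩ := aux_extend key I _ c hcI hcons le_rfl
    exact ⟨r, hcr, (hRep I r).mpr ⟨h1, h2, h3⟩⟩
  -- key closure of Ip
  have star : ∀ t ∈ Ip, ∀ t' ∈ I, key t' = key t → t' ∈ Ip := by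
    intro t ht t' ht'I hkey
    obtain ⟨htI, a, haF, i, hti⟩ := (memIp t).mp ht
    by_contra ht'
    obtain ⟨p, hp, hpfr, hap⟩ := (memF a).mp haF
    obtain ⟨hpI, hpcons, hpcov⟩ := (hRep I p).mp hp
    have htp : t ∈ p := by have := ((memQf p a).mp hap).2 i; rwa [hti] at this
    have hne : t' ≠ t := by rintro rfl; exact ht' ht
    set h : Finset τ := insert t' (p.erase t) with hhdef
    have hhI : h ⊆ I :=
      Finset.insert_subset ht'I ((Finset.erase_subset _ _).trans hpI)
    have hhcons : ∀ t₁ ∈ h, ∀ t₂ ∈ h, key t₁ = key t₂ → t₁ = t₂ := by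
      intro u hu v hv he
      rw [hhdef, Finset.mem_insert] at hu hv
      rcases hu with rfl | hu <;> rcases hv with rfl | hv
      · rfl
      · exfalso
        have hvp := Finset.mem_of_mem_erase hv
        have : v = t := hpcons v hvp t htp (by rw [← he, hkey])
        exact (Finset.ne_of_mem_erase hv) this
      · exfalso
        have hup := Finset.mem_of_mem_erase hu
        have : u = t := hpcons u hup t htp (by rw [he, hkey])
        exact (Finset.ne_of_mem_erase hu) this
      · exact hpcons u (Finset.mem_of_mem_erase hu) v (Finset.mem_of_mem_erase hv) he
    have hhcov : ∀ u ∈ I, ∃ v ∈ h, key v = key u := by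
      intro u hu
      obtain ⟨v, hvp, hvk⟩ := hpcov u hu
      by_cases hvt : v = t
      · refine ⟨t', ?_, ?_⟩
        · rw [hhdef]; exact Finset.mem_insert_self _ _
        · rw [hkey, ← hvt]; exact hvk
      · refine ⟨v, ?_, hvk⟩
        rw [hhdef]
        exact Finset.mem_insert_of_mem (Finset.mem_erase.mpr ⟨hvt, hvp⟩)
    have hhrep : IsRepair I h := (hRep I h).mpr ⟨hhI, hhcons, hhcov⟩
    obtain ⟨h₀, hh₀, hh₀fr, hh₀sub⟩ := frugalBelow I h hhrep
    have hsubp : Qf h₀ ⊆ Qf p := by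
      intro b hb
      have hbF : b ∈ F := (memF b).mpr ⟨h₀, hh₀, hh₀fr, hb⟩
      have hbh : b ∈ Qf h := hh₀sub hb
      rw [memQf] at hbh ⊢
      refine ⟨hbh.1, fun j => ?_⟩
      have hj := hbh.2 j
      rw [hhdef, Finset.mem_insert] at hj
      rcases hj with he | hme
      · exact absurd (he ▸ F_tuples b hbF j) ht'
      · exact Finset.mem_of_mem_erase hme
    have heq : Qf h₀ = Qf p := by
      by_contra hne2
      exact hpfr ⟨h₀, hh₀, Set.ssubset_iff_subset_ne.mpr ⟨hsubp, hne2⟩⟩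
    have hah : a ∈ Qf h := hh₀sub (by rw [heq]; exact hap)
    have hih : tupleOf i a ∈ h := ((memQf h a).mp hah).2 i
    rw [hti, hhdef, Finset.mem_insert] at hih
    rcases hih with he | hme
    · exact hne he.symm
    · exact Finset.notMem_erase t p hme
  have capRep : ∀ r, IsRepair I r → IsRepair Ip (r ∩ Ip) := by
    intro r hr
    obtain ⟨hrI, hrcons, hrcov⟩ := (hRep I r).mp hr
    refine (hRep Ip _).mpr ⟨Finset.inter_subset_right, ?_, ?_⟩
    · intro u hu v hv he
      exact hrcons u (Finset.mem_of_mem_inter_left hu) v (Finset.mem_of_mem_inter_left hv) he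
    · intro u hu
      obtain ⟨v, hvr, hvk⟩ := hrcov u (hIpI hu)
      have hvIp : v ∈ Ip := star u hu v (hrI hvr) hvk
      exact ⟨v, Finset.mem_inter.mpr ⟨hvr, hvIp⟩, hvk⟩
  have capEq : ∀ r r', IsRepair I r → IsRepair Ip r' → r' ⊆ r → r ∩ Ip = r' := by
    intro r r' hr hr' hsub
    obtain ⟨hrI, hrcons, _⟩ := (hRep I r).mp hr
    obtain ⟨hr'Ip, _, hr'cov⟩ := (hRep Ip r').mp hr'
    apply Finset.Subset.antisymm
    · intro u hu
      obtain ⟨hur, huIp⟩ := Finset.mem_inter.mp hu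
      obtain ⟨v, hvr', hvk⟩ := hr'cov u huIp
      have hvu : v = u := hrcons v (hsub hvr') u hur hvk
      exact hvu ▸ hvr'
    · intro u hu
      exact Finset.mem_inter.mpr ⟨hsub hu, hr'Ip hu⟩
  have QfF_cap : ∀ r (a : β), a ∈ Qf r → a ∈ F → a ∈ Qf (r ∩ Ip) := by
    intro r a ha haF
    rw [memQf] at ha ⊢
    exact ⟨ha.1, fun i => Finset.mem_inter.mpr ⟨ha.2 i, F_tuples a haF i⟩⟩
  have frugal_cap : ∀ r, IsRepair I r → (¬ ∃ r', IsRepair I r' ∧ Qf r' ⊂ Qf r) →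
      Qf (r ∩ Ip) = Qf r := by
    intro r hr hfr
    apply Set.Subset.antisymm (Qf_mono Finset.inter_subset_left)
    intro a ha
    exact QfF_cap r a ha ((memF a).mpr ⟨r, hr, hfr, ha⟩)
  have belowP : ∀ r', IsRepair Ip r' →
      ∃ q, IsRepair I q ∧ (¬ ∃ q', IsRepair I q' ∧ Qf q' ⊂ Qf q) ∧ Qf q ⊆ Qf r' := by
    intro r' hr'
    obtain ⟨hr'Ip, hr'cons, _⟩ := (hRep Ip r').mp hr'
    obtain ⟨q₁, hr'q₁, hq₁⟩ := extendRep r' (hr'Ip.trans hIpI) hr'cons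
    obtain ⟨q, hq, hqfr, hqsub⟩ := frugalBelow I q₁ hq₁
    refine ⟨q, hq, hqfr, ?_⟩
    intro a ha
    have haF : a ∈ F := (memF a).mpr ⟨q, hq, hqfr, ha⟩
    have hmem : a ∈ Qf (q₁ ∩ Ip) := QfF_cap q₁ a (hqsub ha) haF
    rwa [capEq q₁ r' hq₁ hr' hr'q₁] at hmem
  have hMeq : M I = M Ip := by
    ext s
    rw [hM I, hM Ip]
    simp only [Set.mem_setOf_eq]
    constructor
    · rintro ⟨r, hr, hfr, rfl⟩
      refine ⟨r ∩ Ip, capRep r hr, ?_, (frugal_cap r hr hfr).symm⟩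
      rintro ⟨p', hp', hss⟩
      rw [frugal_cap r hr hfr] at hss
      obtain ⟨q, hq, hqfr, hqsub⟩ := belowP p' hp'
      exact hfr ⟨q, hq, Set.ssubset_iff_subset_ne.mpr
        ⟨hqsub.trans hss.subset, fun he => hss.ne (Set.Subset.antisymm hss.subset
          (he ▸ hqsub))⟩⟩
    · rintro ⟨r', hr', hfr', rfl⟩
      obtain ⟨q, hq, hqfr, hqsub⟩ := belowP r' hr'
      have heq : Qf q = Qf r' := by
        by_contra hne
        refine hfr' ⟨q ∩ Ip, capRep q hq, ?_⟩
        rw [frugal_cap q hq hqfr]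
        exact Set.ssubset_iff_subset_ne.mpr ⟨hqsub, hne⟩
      exact ⟨q, hq, hqfr, heq.symm⟩
  refine ⟨Ip, hIpI, ?_, hMeq, ?_⟩
  · intro t ht
    obtain ⟨_, a, haF, i, hta⟩ := (memIp t).mp ht
    exact ⟨a, F_Qf haF, i, hta⟩
  · have key_iff : ∀ J : Finset τ, (∀ r, IsRepair J r → (Qf r).Nonempty) ↔
        (∀ s ∈ M J, s.Nonempty) := by
      intro J
      constructor
      · intro h s hs
        rw [hM J] at hs
        obtain ⟨r, hr, _, rfl⟩ := hs
        exact h r hr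
      · intro h r hr
        obtain ⟨r₀, hr₀, hfr₀, hsub⟩ := frugalBelow J r hr
        have hmem : Qf r₀ ∈ M J := by rw [hM J]; exact ⟨r₀, hr₀, hfr₀, rfl⟩
        obtain ⟨a, ha⟩ := h _ hmem
        exact ⟨a, hsub ha⟩
    rw [key_iff I, key_iff Ip, hMeq]
end
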